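/- arXiv:2507.13821 — 5 statements merged into one kernel-verified Lean document; each statement's English description precedes it below -/
import Mathlib

section
/- Let G be a connected d-regular graph (d ≥ 3) with n vertices, m edges, and adjacency eigenvalues λ₁,...,λₙ. Then the characteristic polynomial of the underlying undirected graph L*(G) of the oriented line graph of G equals (x²−4)^{m−n} · ∏_{i=1}^{n} ((x−λᵢ)² − (d−2)²). -/
/-!
Let `S` and `T` be the tail and head incidence matrices of the darts of `G` and `J` the permutation
matrix of dart reversal. Then `A(L*) = T Sᵀ + S Tᵀ - 2J`, so `xI - A(L*) = (xI + 2J) - W Y` with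
`W = [T S]` and `Y = [Sᵀ; Tᵀ]`. As `(xI - 2J)(xI + 2J) = (x² - 4)I`, the Weinstein–Aronszajn
identity trades the determinant over darts for a `2n × 2n` one built from `SᵀS = TᵀT = dI` and
`SᵀT = TᵀS = A`. That matrix is block-symmetric, so its determinant factors as
`det((x - 2)((x - (d - 2))I - A)) · det((x + 2)((x + (d - 2))I - A))`. Finally
`det(xI - 2J) = (x² - 4)^m`: it is monic, a diagonal sign change conjugates `J` to `-J`, so its
square is `det((x² - 4)I)`.
-/

open Polynomial Matrix
open scoped Classical

/-- Vertex type of the oriented line graph: ordered pairs of adjacent vertices. -/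
abbrev OLV {V : Type*} (G : SimpleGraph V) := {p : V × V // G.Adj p.1 p.2}

/-- Arc relation of the oriented line graph: from (u,v) to (v,w) when u ≠ w. -/
def olArc {V : Type*} (G : SimpleGraph V) (a b : OLV G) : Prop :=
  a.1.2 = b.1.1 ∧ a.1.1 ≠ b.1.2

/-- Underlying undirected graph L*(G) of the oriented line graph. -/
def Lstar {V : Type*} (G : SimpleGraph V) : SimpleGraph (OLV G) :=
  SimpleGraph.fromRel (olArc G)

open scoped Finset

theorem Polynomial.Monic.eq_of_mul_self_eq {R : Type*} [CommRing R] [IsDomain R] {p q : R[X]}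
    (hp : p.Monic) (hq : q.Monic) (h : p * p = q * q) : p = q := by
  obtain h | h := mul_self_eq_mul_self_iff.1 h
  · exact h
  · have h₁ : (-1 : R) = 1 := by
      simpa [hp.leadingCoeff, hq.leadingCoeff] using (congrArg Polynomial.leadingCoeff h).symm
    rw [h, ← neg_one_smul R q, h₁, one_smul]

theorem Polynomial.monic_X_sq_sub_four {R : Type*} [CommRing R] [Nontrivial R] :
    (X ^ 2 - 4 : R[X]).Monic := by
  rw [← map_ofNat C 4]
  exact monic_X_pow_sub_C _ two_ne_zero

namespace Matrix

variable {m n R : Type*} [Fintype m] [Fintype n] [DecidableEq m] [DecidableEq n] [CommRing R]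

theorem det_fromBlocks_self (A B : Matrix n n R) :
    (fromBlocks A B B A).det = (A + B).det * (A - B).det := by
  have h : fromBlocks 1 1 0 1 * fromBlocks A B B A * fromBlocks 1 (-1) 0 1
      = fromBlocks (A + B) 0 B (A - B) := by
    simp only [fromBlocks_multiply, Matrix.one_mul, Matrix.zero_mul, Matrix.mul_one,
      Matrix.mul_zero, Matrix.mul_neg, add_zero, zero_add]
    congr 1 <;> abel
  simpa [det_fromBlocks_zero₂₁, det_fromBlocks_zero₁₂] using congrArg det h

theorem det_smul_one_sub_mul_comm (A : Matrix m n R) (B : Matrix n m R) (c : R) :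
    c ^ Fintype.card n * (c • 1 - A * B).det = c ^ Fintype.card m * (c • 1 - B * A).det := by
  simpa [eval_charpoly, smul_one_eq_diagonal] using congrArg (eval c) (charpoly_mul_comm' A B)

theorem smul_one_sub_smul_mul_smul_one_add_smul {J : Matrix n n R} (hJ : J * J = 1) (a b : R) :
    (a • 1 - b • J) * (a • 1 + b • J) = (a ^ 2 - b ^ 2) • 1 := by
  simp only [Matrix.sub_mul, Matrix.mul_add, Matrix.smul_mul, Matrix.mul_smul, Matrix.one_mul,
    Matrix.mul_one, hJ]
  module

theorem det_smul_one_add_smul_eq_of_conj {D J : Matrix n n R} (hD : D * D = 1)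
    (hDJD : D * J * D = -J) (a b : R) : (a • 1 + b • J).det = (a • 1 - b • J).det := by
  have h : D * (a • 1 + b • J) * D = a • 1 - b • J := by
    rw [Matrix.mul_add, Matrix.add_mul, Matrix.mul_smul, Matrix.mul_one, Matrix.smul_mul, hD,
      Matrix.mul_smul, Matrix.smul_mul, hDJD, smul_neg, sub_eq_add_neg]
  rw [← h, det_mul, det_mul, mul_comm, ← mul_assoc, ← det_mul, hD, det_one, one_mul]

theorem charpoly_eq_det (M : Matrix n n R) : M.charpoly = ((X : R[X]) • 1 - M.map C).det := by
  rw [charpoly, charmatrix, scalar_apply, smul_one_eq_diagonal]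
  rfl

theorem charpoly_comp (M : Matrix n n R) (p : R[X]) :
    M.charpoly.comp p = (p • 1 - M.map C).det := by
  rw [charpoly_eq_det, Polynomial.comp, ← coe_eval₂RingHom, RingHom.map_det]
  congr 1
  ext i j
  by_cases h : i = j <;> simp [h]

end Matrix

namespace SimpleGraph

variable {V : Type*} {G : SimpleGraph V} [DecidableRel G.Adj]

theorem adjMatrix_map {R S : Type*} [NonAssocSemiring R] [NonAssocSemiring S] (f : R →+* S) :
    (G.adjMatrix R).map f = G.adjMatrix S := by
  ext u v
  simp [apply_ite f]

theorem IsRegularOfDegree.diagonal_degree [Fintype V] [DecidableEq V] {R : Type*}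
    [NonAssocSemiring R] {d : ℕ}
    (hreg : G.IsRegularOfDegree d) : (diagonal fun v => (G.degree v : R)) = (d : R) • 1 := by
  rw [smul_one_eq_diagonal, funext fun v => congrArg Nat.cast (hreg v)]

theorem IsRegularOfDegree.card_le_card_edgeFinset [Fintype V] {d : ℕ}
    (hreg : G.IsRegularOfDegree d) (hd : 2 ≤ d) : Fintype.card V ≤ #G.edgeFinset := by
  have h := G.sum_degrees_eq_twice_card_edges
  simp only [hreg.degree_eq, Finset.sum_const, Finset.card_univ, smul_eq_mul] at h
  nlinarith

end SimpleGraph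

namespace OrientedLineGraph

variable {V : Type*} (G : SimpleGraph V)

def reverse : Equiv.Perm (OLV G) :=
  Function.Involutive.toPerm (fun e => ⟨e.1.swap, e.2.symm⟩) fun _ => rfl

@[simp]
lemma coe_reverse (e : OLV G) : (reverse G e).1 = e.1.swap := rfl

lemma reverse_mul_self : reverse G * reverse G = 1 := Equiv.ext fun _ => rfl

lemma reverse_eq_iff {e f : OLV G} : reverse G e = f ↔ e.1.2 = f.1.1 ∧ e.1.1 = f.1.2 := by
  rw [Subtype.ext_iff]
  exact Prod.ext_iff

lemma lstar_adj_iff {e f : OLV G} :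
    (Lstar G).Adj e f ↔
      (e.1.2 = f.1.1 ∧ e.1.1 ≠ f.1.2) ∨ (e.1.1 = f.1.2 ∧ e.1.2 ≠ f.1.1) := by
  rw [Lstar, SimpleGraph.fromRel_adj, olArc, olArc]
  constructor
  · rintro ⟨-, h | h⟩
    · exact Or.inl h
    · exact Or.inr ⟨h.1.symm, fun h' => h.2 h'.symm⟩
  · rintro (h | h)
    · exact ⟨by rintro rfl; exact e.2.ne h.1.symm, Or.inl h⟩
    · exact ⟨by rintro rfl; exact e.2.ne h.1, Or.inr ⟨h.1.symm, fun h' => h.2 h'.symm⟩⟩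

def dartEquiv : OLV G ≃ G.Dart where
  toFun e := ⟨e.1, e.2⟩
  invFun d := ⟨d.toProd, d.adj⟩

lemma card_olv [Fintype V] : Fintype.card (OLV G) = 2 * #G.edgeFinset := by
  rw [Fintype.card_congr (dartEquiv G), G.dart_card_eq_twice_card_edges]

variable [DecidableEq V] (R : Type*) [CommRing R]

abbrev reverseMatrix : Matrix (OLV G) (OLV G) R := (reverse G).permMatrix R

lemma reverseMatrix_apply (e f : OLV G) :
    reverseMatrix G R e f = if reverse G e = f then 1 else 0 := by
  simp [PEquiv.toMatrix_apply]

lemma transpose_reverseMatrix : (reverseMatrix G R)ᵀ = reverseMatrix G R := by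
  rw [transpose_permMatrix, inv_eq_of_mul_eq_one_right (reverse_mul_self G)]

variable [Fintype V]

lemma reverseMatrix_mul_self : reverseMatrix G R * reverseMatrix G R = 1 := by
  rw [← permMatrix_mul, reverse_mul_self, permMatrix_one]

lemma card_filter_fst_eq_degree (v : V) : #{e : OLV G | e.1.1 = v} = G.degree v := by
  rw [← G.dart_fst_fiber_card_eq_degree]
  exact Finset.card_equiv (dartEquiv G) (by simp [dartEquiv])

def tailMatrix : Matrix (OLV G) V R := Matrix.of fun e v => if e.1.1 = v then 1 else 0

def headMatrix : Matrix (OLV G) V R := Matrix.of fun e v => if e.1.2 = v then 1 else 0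

lemma reverseMatrix_mul_tailMatrix : reverseMatrix G R * tailMatrix G R = headMatrix G R := by
  rw [PEquiv.toMatrix_toPEquiv_mul]; rfl

lemma reverseMatrix_mul_headMatrix : reverseMatrix G R * headMatrix G R = tailMatrix G R := by
  rw [PEquiv.toMatrix_toPEquiv_mul]; rfl

lemma transpose_tailMatrix_mul_tailMatrix :
    (tailMatrix G R)ᵀ * tailMatrix G R = diagonal fun v => (G.degree v : R) := by
  ext u v
  simp only [mul_apply, transpose_apply, tailMatrix, of_apply, ← ite_and, mul_ite, mul_one,
    mul_zero, Finset.sum_boole, diagonal_apply]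
  split_ifs with huv
  · subst huv
    simp [card_filter_fst_eq_degree]
  · rw [Finset.card_eq_zero.2 (Finset.filter_eq_empty_iff.2
      fun e _ he => huv (he.2.symm.trans he.1)), Nat.cast_zero]

lemma transpose_headMatrix_mul_headMatrix :
    (headMatrix G R)ᵀ * headMatrix G R = diagonal fun v => (G.degree v : R) := by
  rw [← reverseMatrix_mul_tailMatrix, transpose_mul, Matrix.mul_assoc,
    ← Matrix.mul_assoc _ (reverseMatrix G R), transpose_reverseMatrix, reverseMatrix_mul_self,
    Matrix.one_mul, transpose_tailMatrix_mul_tailMatrix]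

lemma transpose_tailMatrix_mul_headMatrix :
    (tailMatrix G R)ᵀ * headMatrix G R = G.adjMatrix R := by
  ext u v
  simp only [mul_apply, transpose_apply, tailMatrix, headMatrix, of_apply, ← ite_and, mul_ite,
    mul_one, mul_zero, Finset.sum_boole, SimpleGraph.adjMatrix_apply]
  split_ifs with h
  · rw [Finset.card_eq_one.2 ⟨⟨(u, v), h⟩, ?_⟩, Nat.cast_one]
    ext e
    simp [Subtype.ext_iff, Prod.ext_iff, and_comm]
  · rw [Finset.card_eq_zero.2 (Finset.filter_eq_empty_iff.2
      fun e _ (he : e.1.2 = v ∧ e.1.1 = u) => h (he.1 ▸ he.2 ▸ e.2)), Nat.cast_zero]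

lemma transpose_headMatrix_mul_tailMatrix :
    (headMatrix G R)ᵀ * tailMatrix G R = G.adjMatrix R := by
  rw [← transpose_transpose (tailMatrix G R), ← transpose_mul,
    transpose_tailMatrix_mul_headMatrix, G.transpose_adjMatrix]

lemma headMatrix_mul_transpose_tailMatrix_apply (e f : OLV G) :
    (headMatrix G R * (tailMatrix G R)ᵀ) e f = if e.1.2 = f.1.1 then 1 else 0 := by
  simp [mul_apply, tailMatrix, headMatrix, eq_comm]

lemma adjMatrix_lstar :
    (Lstar G).adjMatrix R
      = headMatrix G R * (tailMatrix G R)ᵀ + tailMatrix G R * (headMatrix G R)ᵀ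
        - (2 : R) • reverseMatrix G R := by
  ext e f
  rw [← transpose_transpose (tailMatrix G R * _), transpose_mul, transpose_transpose]
  simp only [Matrix.sub_apply, Matrix.add_apply, Matrix.smul_apply, transpose_apply,
    headMatrix_mul_transpose_tailMatrix_apply, SimpleGraph.adjMatrix_apply, lstar_adj_iff,
    reverseMatrix_apply, reverse_eq_iff]
  by_cases h₁ : e.1.2 = f.1.1 <;> by_cases h₂ : e.1.1 = f.1.2 <;>
    simp [h₁, h₂, @eq_comm _ f.1.2, one_add_one_eq_two]

lemma fromRows_mul_fromCols_incidence (d : ℕ) (hreg : G.IsRegularOfDegree d) :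
    fromRows (tailMatrix G R)ᵀ (headMatrix G R)ᵀ * fromCols (headMatrix G R) (tailMatrix G R)
      = fromBlocks (G.adjMatrix R) ((d : R) • 1) ((d : R) • 1) (G.adjMatrix R) := by
  rw [fromRows_mul_fromCols, transpose_tailMatrix_mul_headMatrix,
    transpose_tailMatrix_mul_tailMatrix, transpose_headMatrix_mul_headMatrix,
    transpose_headMatrix_mul_tailMatrix, hreg.diagonal_degree]

lemma fromRows_mul_reverseMatrix_mul_fromCols_incidence (d : ℕ) (hreg : G.IsRegularOfDegree d) :
    fromRows (tailMatrix G R)ᵀ (headMatrix G R)ᵀ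
        * (reverseMatrix G R * fromCols (headMatrix G R) (tailMatrix G R))
      = fromBlocks ((d : R) • 1) (G.adjMatrix R) (G.adjMatrix R) ((d : R) • 1) := by
  rw [mul_fromCols, reverseMatrix_mul_headMatrix, reverseMatrix_mul_tailMatrix,
    fromRows_mul_fromCols, transpose_tailMatrix_mul_headMatrix,
    transpose_tailMatrix_mul_tailMatrix, transpose_headMatrix_mul_headMatrix,
    transpose_headMatrix_mul_tailMatrix, hreg.diagonal_degree]

lemma exists_conj_reverseMatrix_eq_neg :
    ∃ D : Matrix (OLV G) (OLV G) R,
      D * D = 1 ∧ D * reverseMatrix G R * D = -reverseMatrix G R := by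
  let s : OLV G → R := fun e =>
    if Fintype.equivFin V e.1.1 < Fintype.equivFin V e.1.2 then 1 else -1
  have hs : ∀ e, s e * s e = 1 := fun e => by dsimp only [s]; split_ifs <;> simp
  have hsrev : ∀ e, s e * s (reverse G e) = -1 := fun e => by
    have hne : Fintype.equivFin V e.1.1 ≠ Fintype.equivFin V e.1.2 :=
      (Fintype.equivFin V).injective.ne e.2.ne
    dsimp only [s]
    rcases hne.lt_or_gt with h | h
    · simp [h, h.not_gt]
    · simp [h, h.not_gt]
  refine ⟨diagonal s, by rw [diagonal_mul_diagonal, funext hs, diagonal_one], ?_⟩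
  ext e f
  rw [mul_diagonal, diagonal_mul, Matrix.neg_apply, reverseMatrix_apply]
  split_ifs with h
  · subst h; simpa using hsrev e
  · simp

lemma det_X_smul_one_sub_C_smul_reverseMatrix [IsDomain R] (c : R) :
    ((X : R[X]) • 1 - C c • reverseMatrix G R[X]).det = (X ^ 2 - C c ^ 2) ^ #G.edgeFinset := by
  have hcharpoly : (c • reverseMatrix G R).charpoly
      = ((X : R[X]) • 1 - C c • reverseMatrix G R[X]).det := by
    rw [charpoly_eq_det]
    congr 2
    refine Matrix.ext fun e f => ?_
    simp [apply_ite C]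
  obtain ⟨D, hD, hDJD⟩ := exists_conj_reverseMatrix_eq_neg G R[X]
  have hsq : ((X : R[X]) • 1 - C c • reverseMatrix G R[X]).det
        * ((X : R[X]) • 1 - C c • reverseMatrix G R[X]).det
      = (X ^ 2 - C c ^ 2) ^ #G.edgeFinset * (X ^ 2 - C c ^ 2) ^ #G.edgeFinset := by
    nth_rewrite 2 [← det_smul_one_add_smul_eq_of_conj hD hDJD]
    rw [← det_mul, smul_one_sub_smul_mul_smul_one_add_smul (reverseMatrix_mul_self G R[X]),
      det_smul, det_one, mul_one, card_olv, ← pow_add, two_mul]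
  have hmonic : (X ^ 2 - C c ^ 2 : R[X]).Monic := by
    rw [← map_pow]
    exact monic_X_pow_sub_C _ two_ne_zero
  exact (hcharpoly ▸ charpoly_monic _).eq_of_mul_self_eq (hmonic.pow _) hsq

theorem det_mul_det_smul_one_sub_adjMatrix_lstar (d : ℕ) (hreg : G.IsRegularOfDegree d) (x : R) :
    (x • 1 - (2 : R) • reverseMatrix G R).det * (x • 1 - (Lstar G).adjMatrix R).det
        * (x ^ 2 - 4) ^ (Fintype.card V + Fintype.card V)
      = (x ^ 2 - 4) ^ (Fintype.card (OLV G) + Fintype.card V)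
        * ((x - (d - 2)) • 1 - G.adjMatrix R).det
        * ((x + (d - 2)) • 1 - G.adjMatrix R).det := by
  set W := fromCols (headMatrix G R) (tailMatrix G R) with hW
  set Y := fromRows (tailMatrix G R)ᵀ (headMatrix G R)ᵀ with hY
  set Q := x • 1 - (2 : R) • reverseMatrix G R with hQ
  set A := G.adjMatrix R
  have hQL : Q * (x • 1 - (Lstar G).adjMatrix R) = (x ^ 2 - 4) • 1 - Q * (W * Y) := by
    have hQP : Q * (x • 1 + (2 : R) • reverseMatrix G R) = (x ^ 2 - 4) • 1 := by
      rw [smul_one_sub_smul_mul_smul_one_add_smul (reverseMatrix_mul_self G R)]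
      norm_num
    rw [← hQP, ← Matrix.mul_sub, hW, hY, fromCols_mul_fromRows, adjMatrix_lstar]
    congr 1
    abel
  have hblocks : (x ^ 2 - 4) • 1 - Y * (Q * W) = fromBlocks
      ((x ^ 2 - 4 + 2 * d : R) • 1 - x • A) ((2 : R) • A - (x * d : R) • 1)
      ((2 : R) • A - (x * d : R) • 1) ((x ^ 2 - 4 + 2 * d : R) • 1 - x • A) := by
    rw [hQ, Matrix.sub_mul, Matrix.smul_mul, Matrix.one_mul, Matrix.smul_mul, Matrix.mul_sub,
      Matrix.mul_smul, Matrix.mul_smul, fromRows_mul_fromCols_incidence G R d hreg,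
      fromRows_mul_reverseMatrix_mul_fromCols_incidence G R d hreg, ← fromBlocks_one]
    simp only [fromBlocks_smul, sub_eq_add_neg, fromBlocks_neg, fromBlocks_add, smul_zero, zero_add]
    congr 1 <;> module
  have hplus : ((x ^ 2 - 4 + 2 * d : R) • 1 - x • A) + ((2 : R) • A - (x * d : R) • 1)
      = (x - 2) • ((x - (d - 2)) • 1 - A) := by module
  have hminus : ((x ^ 2 - 4 + 2 * d : R) • 1 - x • A) - ((2 : R) • A - (x * d : R) • 1)
      = (x + 2) • ((x + (d - 2)) • 1 - A) := by module
  have key := det_smul_one_sub_mul_comm (Q * W) Y (x ^ 2 - 4)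
  rw [Matrix.mul_assoc, ← hQL, det_mul, hblocks, det_fromBlocks_self, hplus, hminus, det_smul,
    det_smul, Fintype.card_sum] at key
  have hfactor : (x - 2) ^ Fintype.card V * (x + 2) ^ Fintype.card V
      = (x ^ 2 - 4) ^ Fintype.card V := by
    rw [← mul_pow]; ring
  rw [pow_add (x ^ 2 - 4) (Fintype.card (OLV G)), ← hfactor]
  linear_combination key

theorem charpoly_adjMatrix_lstar_mul [IsDomain R] (d : ℕ) (hreg : G.IsRegularOfDegree d) :
    ((Lstar G).adjMatrix R).charpoly * (X ^ 2 - 4) ^ Fintype.card V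
      = (X ^ 2 - 4) ^ #G.edgeFinset * (G.adjMatrix R).charpoly.comp (X - C ((d : R) - 2))
        * (G.adjMatrix R).charpoly.comp (X + C ((d : R) - 2)) := by
  have h := det_mul_det_smul_one_sub_adjMatrix_lstar G R[X] d hreg X
  have hJ := det_X_smul_one_sub_C_smul_reverseMatrix G R 2
  have hC2 : (C 2 : R[X]) = 2 := map_ofNat C 2
  have hshift : C ((d : R) - 2) = (d : R[X]) - 2 := by rw [map_sub, map_natCast, hC2]
  rw [hC2, show (2 : R[X]) ^ 2 = 4 by norm_num] at hJ
  rw [hJ, card_olv, ← SimpleGraph.adjMatrix_map (G := Lstar G) C,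
    ← SimpleGraph.adjMatrix_map (G := G) C, ← charpoly_eq_det, ← hshift, ← charpoly_comp,
    ← charpoly_comp] at h
  refine mul_left_cancel₀
    (pow_ne_zero (#G.edgeFinset + Fintype.card V) monic_X_sq_sub_four.ne_zero) ?_
  linear_combination h

end OrientedLineGraph

open OrientedLineGraph in
theorem stmt_0_general {V : Type*} [Fintype V] [DecidableEq V] (G : SimpleGraph V)
    (d n m : ℕ) (hd : 3 ≤ d) (hreg : G.IsRegularOfDegree d)
    (hn : Fintype.card V = n) (hm : G.edgeFinset.card = m)
    (lam : Fin n → ℝ)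
    (hchar : (G.adjMatrix ℝ).charpoly = ∏ i, (X - C (lam i))) :
    ((Lstar G).adjMatrix ℝ).charpoly =
      (X ^ 2 - 4) ^ (m - n) *
        ∏ i, ((X - C (lam i)) ^ 2 - C ((d : ℝ) - 2) ^ 2) := by
  subst hn hm
  have key := charpoly_adjMatrix_lstar_mul G ℝ d hreg
  simp only [hchar, prod_comp, sub_comp, X_comp, C_comp] at key
  have hprod : ∀ s : ℝ, (∏ i, (X - C s - C (lam i))) * ∏ i, (X + C s - C (lam i))
      = ∏ i, ((X - C (lam i)) ^ 2 - C s ^ 2) := fun s => by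
    rw [← Finset.prod_mul_distrib]
    exact Finset.prod_congr rfl fun i _ => by ring
  apply mul_right_cancel₀ (pow_ne_zero (Fintype.card V) monic_X_sq_sub_four.ne_zero)
  rw [key, mul_assoc, hprod, mul_right_comm, ← pow_add,
    Nat.sub_add_cancel (hreg.card_le_card_edgeFinset (by omega))]

theorem stmt_0 {V : Type*} [Fintype V] [DecidableEq V] (G : SimpleGraph V)
    (d n m : ℕ) (hd : 3 ≤ d) (hreg : G.IsRegularOfDegree d) (hconn : G.Connected)
    (hn : Fintype.card V = n) (hm : G.edgeFinset.card = m)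
    (lam : Fin n → ℝ)
    (hchar : (G.adjMatrix ℝ).charpoly = ∏ i, (X - C (lam i))) :
    ((Lstar G).adjMatrix ℝ).charpoly =
      (X ^ 2 - 4) ^ (m - n) *
        ∏ i, ((X - C (lam i)) ^ 2 - C ((d : ℝ) - 2) ^ 2) :=
  stmt_0_general G d n m hd hreg hn hm lam hchar
end

section
/- Let G be a connected d-regular graph with d ≥ 3. If all adjacency eigenvalues of G are integers, then all adjacency eigenvalues of L*(G) are integers. -/
open Polynomial Matrix
open scoped Classical

/-!
Let `T`, `H` be the tail and head incidence matrices of the arcs of `G` and `P` the permutation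
matrix of arc reversal. Then the adjacency matrix of L*(G) is `M = T Hᵀ + H Tᵀ - 2P`, and for a
`d`-regular `G` (so `TᵀT = HᵀH = d`, `TᵀH = HᵀT = A`, `TᵀP = Hᵀ`) this gives the intertwining
relations `(Tᵀ ± Hᵀ) M = (A ± (d - 2)) (Tᵀ ± Hᵀ)`. So an eigenvector `v` of `M` for `x` either
yields an eigenvector `(Tᵀ ± Hᵀ) v` of `A` for `x ∓ (d - 2)`, or satisfies `Tᵀ v = Hᵀ v = 0`; in
the latter case `M v = -2 P v`, and `P² = 1` forces `x = ±2`.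
-/

section Eigen
variable {K : Type*} [Field K] {n : Type*} [Fintype n] [DecidableEq n]

lemma Matrix.isRoot_charpoly_iff_exists_mulVec_eq_smul {A : Matrix n n K} {x : K} :
    A.charpoly.IsRoot x ↔ ∃ v ≠ 0, A *ᵥ v = x • v := by
  simp only [← Matrix.charpoly_toLin', ← Module.End.hasEigenvalue_iff_isRoot_charpoly,
    Module.End.hasEigenvalue_iff, Submodule.ne_bot_iff, Module.End.mem_eigenspace_iff,
    Matrix.toLin'_apply]
  grind

omit [DecidableEq n] in
lemma Matrix.isRoot_charpoly_sub_of_mul_eq {m : Type*} [Fintype m] [DecidableEq m]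
    {X : Matrix m n K} {A : Matrix m m K} {M : Matrix n n K} {c x : K} {v : n → K}
    (hX : X * M = A * X + c • X) (hv : M *ᵥ v = x • v) (hXv : X *ᵥ v ≠ 0) :
    A.charpoly.IsRoot (x - c) := by
  refine Matrix.isRoot_charpoly_iff_exists_mulVec_eq_smul.2 ⟨X *ᵥ v, hXv, ?_⟩
  calc A *ᵥ (X *ᵥ v) = (X * M - c • X) *ᵥ v := by
        rw [hX, add_sub_cancel_right, Matrix.mulVec_mulVec]
    _ = (x - c) • X *ᵥ v := by
      rw [Matrix.sub_mulVec, ← Matrix.mulVec_mulVec, hv, Matrix.mulVec_smul, Matrix.smul_mulVec,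
        sub_smul]

lemma Matrix.mul_self_eq_one_of_mulVec_eq_smul {P : Matrix n n K} {c : K} {v : n → K}
    (hP : P * P = 1) (hv : P *ᵥ v = c • v) (hv0 : v ≠ 0) : c * c = 1 :=
  smul_left_injective K hv0 <| by
    simp only [mul_smul, ← hv, ← Matrix.mulVec_smul, Matrix.mulVec_mulVec, hP, Matrix.one_mulVec,
      one_smul]

end Eigen

namespace OLV

variable {V : Type*} {G : SimpleGraph V}

def rev (a : OLV G) : OLV G := ⟨(a.1.2, a.1.1), a.2.symm⟩

@[simp] lemma rev_rev (a : OLV G) : a.rev.rev = a := rfl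

lemma rev_eq_iff {a b : OLV G} : a.rev = b ↔ a.1.2 = b.1.1 ∧ a.1.1 = b.1.2 := by
  simp [rev, Subtype.ext_iff, Prod.ext_iff]

lemma sum_eq_sum_neighborFinset [Fintype V] [DecidableEq V] {M : Type*} [AddCommMonoid M]
    (f : V × V → M) : ∑ a : OLV G, f a.1 = ∑ u, ∑ v ∈ G.neighborFinset u, f (u, v) := by
  simp only [SimpleGraph.neighborFinset_eq_filter, Finset.sum_filter]
  rw [← Fintype.sum_prod_type' fun u v => if G.Adj u v then f (u, v) else 0, ← Finset.sum_filter]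
  exact (Finset.sum_subtype _ (fun _ => by simp) _).symm

end OLV

section IncidenceMatrices

variable (R : Type*) [CommRing R] {V : Type*} [Fintype V] [DecidableEq V] (G : SimpleGraph V)

def tailMatrix : Matrix (OLV G) V R := Matrix.of fun a u => if a.1.1 = u then 1 else 0

def headMatrix : Matrix (OLV G) V R := Matrix.of fun a u => if a.1.2 = u then 1 else 0

def revMatrix : Matrix (OLV G) (OLV G) R := Matrix.of fun a b => if a.rev = b then 1 else 0

variable {R G}

lemma transpose_tailMatrix_mul_tailMatrix :
    (tailMatrix R G)ᵀ * tailMatrix R G = Matrix.diagonal fun u => (G.degree u : R) := by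
  ext u w
  simp only [Matrix.mul_apply, Matrix.transpose_apply, tailMatrix, Matrix.of_apply, ite_mul,
    one_mul, zero_mul]
  rw [OLV.sum_eq_sum_neighborFinset fun p => if p.1 = u then if p.1 = w then (1 : R) else 0 else 0]
  by_cases h : u = w <;> simp [h]

lemma transpose_tailMatrix_mul_headMatrix :
    (tailMatrix R G)ᵀ * headMatrix R G = G.adjMatrix R := by
  ext u w
  simp only [Matrix.mul_apply, Matrix.transpose_apply, tailMatrix, headMatrix, Matrix.of_apply,
    ite_mul, one_mul, zero_mul]
  rw [OLV.sum_eq_sum_neighborFinset fun p => if p.1 = u then if p.2 = w then (1 : R) else 0 else 0]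
  simp [SimpleGraph.adjMatrix_apply]

lemma revMatrix_mul_tailMatrix : revMatrix R G * tailMatrix R G = headMatrix R G := by
  ext a u
  simp only [Matrix.mul_apply, revMatrix, tailMatrix, headMatrix, Matrix.of_apply, ite_mul,
    one_mul, zero_mul, Finset.sum_ite_eq, Finset.mem_univ, if_true]
  rfl

omit [Fintype V] in
lemma transpose_revMatrix : (revMatrix R G)ᵀ = revMatrix R G := by
  ext a b
  simp only [Matrix.transpose_apply, revMatrix, Matrix.of_apply, OLV.rev_eq_iff]
  grind

lemma revMatrix_mul_self : revMatrix R G * revMatrix R G = 1 := by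
  ext a b
  simp only [Matrix.mul_apply, revMatrix, Matrix.of_apply, ite_mul, one_mul, zero_mul,
    Finset.sum_ite_eq, Finset.mem_univ, if_true, OLV.rev_rev, Matrix.one_apply]
  congr

lemma tailMatrix_mul_transpose_headMatrix_apply (a b : OLV G) :
    (tailMatrix R G * (headMatrix R G)ᵀ) a b = if a.1.1 = b.1.2 then 1 else 0 := by
  simp only [Matrix.mul_apply, Matrix.transpose_apply, tailMatrix, headMatrix, Matrix.of_apply,
    ite_mul, one_mul, zero_mul, Finset.sum_ite_eq, Finset.mem_univ, if_true]
  exact if_congr eq_comm rfl rfl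

lemma headMatrix_mul_transpose_tailMatrix_apply (a b : OLV G) :
    (headMatrix R G * (tailMatrix R G)ᵀ) a b = if a.1.2 = b.1.1 then 1 else 0 := by
  simp only [Matrix.mul_apply, Matrix.transpose_apply, tailMatrix, headMatrix, Matrix.of_apply,
    ite_mul, one_mul, zero_mul, Finset.sum_ite_eq, Finset.mem_univ, if_true]
  exact if_congr eq_comm rfl rfl

omit [Fintype V] [DecidableEq V] in
lemma lstar_adj_iff {a b : OLV G} :
    (Lstar G).Adj a b ↔ a.1.2 = b.1.1 ∧ a.1.1 ≠ b.1.2 ∨ a.1.1 = b.1.2 ∧ a.1.2 ≠ b.1.1 := by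
  have := G.ne_of_adj a.2
  simp only [Lstar, SimpleGraph.fromRel_adj, olArc]
  grind

lemma adjMatrix_lstar_add_two_smul_revMatrix :
    (Lstar G).adjMatrix R + (2 : R) • revMatrix R G =
      tailMatrix R G * (headMatrix R G)ᵀ + headMatrix R G * (tailMatrix R G)ᵀ := by
  ext a b
  simp only [Matrix.add_apply, Matrix.smul_apply, SimpleGraph.adjMatrix_apply, lstar_adj_iff,
    revMatrix, Matrix.of_apply, OLV.rev_eq_iff, tailMatrix_mul_transpose_headMatrix_apply,
    headMatrix_mul_transpose_tailMatrix_apply]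
  by_cases h₁ : a.1.1 = b.1.2 <;> by_cases h₂ : a.1.2 = b.1.1 <;>
    simp [h₁, h₂, one_add_one_eq_two]

lemma adjMatrix_lstar_eq :
    (Lstar G).adjMatrix R =
      tailMatrix R G * (headMatrix R G)ᵀ + headMatrix R G * (tailMatrix R G)ᵀ -
        (2 : R) • revMatrix R G :=
  eq_sub_of_add_eq adjMatrix_lstar_add_two_smul_revMatrix

end IncidenceMatrices

section Regular
variable {R : Type*} [CommRing R] {V : Type*} [Fintype V] [DecidableEq V] {G : SimpleGraph V}

lemma transpose_tailMatrix_mul_revMatrix :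
    (tailMatrix R G)ᵀ * revMatrix R G = (headMatrix R G)ᵀ := by
  rw [← transpose_revMatrix, ← Matrix.transpose_mul, revMatrix_mul_tailMatrix]

lemma transpose_headMatrix_mul_revMatrix :
    (headMatrix R G)ᵀ * revMatrix R G = (tailMatrix R G)ᵀ := by
  rw [← transpose_tailMatrix_mul_revMatrix, Matrix.mul_assoc, revMatrix_mul_self, Matrix.mul_one]

lemma transpose_headMatrix_mul_headMatrix :
    (headMatrix R G)ᵀ * headMatrix R G = Matrix.diagonal fun u => (G.degree u : R) := by
  rw [← revMatrix_mul_tailMatrix, Matrix.transpose_mul, transpose_revMatrix, Matrix.mul_assoc,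
    ← Matrix.mul_assoc (revMatrix R G), revMatrix_mul_self, Matrix.one_mul,
    transpose_tailMatrix_mul_tailMatrix]

lemma transpose_headMatrix_mul_tailMatrix :
    (headMatrix R G)ᵀ * tailMatrix R G = G.adjMatrix R := by
  rw [← G.transpose_adjMatrix, ← transpose_tailMatrix_mul_headMatrix, Matrix.transpose_mul,
    Matrix.transpose_transpose]

variable {d : ℕ}

lemma SimpleGraph.IsRegularOfDegree.diagonal_degree_eq_smul_one (hreg : G.IsRegularOfDegree d) :
    Matrix.diagonal (fun u => (G.degree u : R)) = (d : R) • 1 := by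
  simp [hreg.degree_eq, Matrix.smul_one_eq_diagonal]

lemma transpose_tailMatrix_mul_adjMatrix_lstar (hreg : G.IsRegularOfDegree d) :
    (tailMatrix R G)ᵀ * (Lstar G).adjMatrix R =
      G.adjMatrix R * (tailMatrix R G)ᵀ + ((d : R) - 2) • (headMatrix R G)ᵀ := by
  rw [adjMatrix_lstar_eq, Matrix.mul_sub, Matrix.mul_add, ← Matrix.mul_assoc, ← Matrix.mul_assoc,
    transpose_tailMatrix_mul_tailMatrix, hreg.diagonal_degree_eq_smul_one,
    transpose_tailMatrix_mul_headMatrix, Matrix.mul_smul, transpose_tailMatrix_mul_revMatrix,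
    Matrix.smul_mul, Matrix.one_mul, sub_smul]
  abel

lemma transpose_headMatrix_mul_adjMatrix_lstar (hreg : G.IsRegularOfDegree d) :
    (headMatrix R G)ᵀ * (Lstar G).adjMatrix R =
      G.adjMatrix R * (headMatrix R G)ᵀ + ((d : R) - 2) • (tailMatrix R G)ᵀ := by
  rw [adjMatrix_lstar_eq, Matrix.mul_sub, Matrix.mul_add, ← Matrix.mul_assoc, ← Matrix.mul_assoc,
    transpose_headMatrix_mul_headMatrix, hreg.diagonal_degree_eq_smul_one,
    transpose_headMatrix_mul_tailMatrix, Matrix.mul_smul, transpose_headMatrix_mul_revMatrix,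
    Matrix.smul_mul, Matrix.one_mul, sub_smul]
  abel

lemma transpose_tailMatrix_add_transpose_headMatrix_mul_adjMatrix_lstar
    (hreg : G.IsRegularOfDegree d) :
    ((tailMatrix R G)ᵀ + (headMatrix R G)ᵀ) * (Lstar G).adjMatrix R =
      G.adjMatrix R * ((tailMatrix R G)ᵀ + (headMatrix R G)ᵀ) +
        ((d : R) - 2) • ((tailMatrix R G)ᵀ + (headMatrix R G)ᵀ) := by
  rw [Matrix.add_mul, transpose_tailMatrix_mul_adjMatrix_lstar hreg,
    transpose_headMatrix_mul_adjMatrix_lstar hreg, Matrix.mul_add, smul_add]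
  abel

lemma transpose_tailMatrix_sub_transpose_headMatrix_mul_adjMatrix_lstar
    (hreg : G.IsRegularOfDegree d) :
    ((tailMatrix R G)ᵀ - (headMatrix R G)ᵀ) * (Lstar G).adjMatrix R =
      G.adjMatrix R * ((tailMatrix R G)ᵀ - (headMatrix R G)ᵀ) +
        (2 - (d : R)) • ((tailMatrix R G)ᵀ - (headMatrix R G)ᵀ) := by
  rw [Matrix.sub_mul, transpose_tailMatrix_mul_adjMatrix_lstar hreg,
    transpose_headMatrix_mul_adjMatrix_lstar hreg, Matrix.mul_sub, smul_sub, ← neg_sub (d : R),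
    neg_smul, neg_smul]
  abel

end Regular

section Spectrum
variable {K : Type*} [Field K] {V : Type*} [Fintype V] [DecidableEq V] {G : SimpleGraph V} {d : ℕ}

lemma eq_two_or_eq_neg_two_of_mulVec_eq_smul_lstar [NeZero (2 : K)] {x : K} {v : OLV G → K}
    (hv0 : v ≠ 0) (hv : (Lstar G).adjMatrix K *ᵥ v = x • v)
    (hadd : ((tailMatrix K G)ᵀ + (headMatrix K G)ᵀ) *ᵥ v = 0)
    (hsub : ((tailMatrix K G)ᵀ - (headMatrix K G)ᵀ) *ᵥ v = 0) : x = 2 ∨ x = -2 := by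
  rw [Matrix.add_mulVec] at hadd
  rw [Matrix.sub_mulVec] at hsub
  have hT : (tailMatrix K G)ᵀ *ᵥ v = 0 := by
    refine (smul_eq_zero.1 ?_).resolve_left (two_ne_zero (α := K))
    rw [two_smul]
    linear_combination hadd + hsub
  have hH : (headMatrix K G)ᵀ *ᵥ v = 0 := by
    linear_combination hadd - hT
  have hrev : revMatrix K G *ᵥ v = (-(x / 2)) • v := by
    have h := congrArg (· *ᵥ v) (adjMatrix_lstar_add_two_smul_revMatrix (R := K) (G := G))
    simp only [Matrix.add_mulVec, ← Matrix.mulVec_mulVec, hT, hH, Matrix.mulVec_zero, add_zero,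
      hv, Matrix.smul_mulVec] at h
    calc revMatrix K G *ᵥ v = (2 : K)⁻¹ • (2 : K) • revMatrix K G *ᵥ v := by
          rw [smul_smul, inv_mul_cancel₀ two_ne_zero, one_smul]
      _ = (-(x / 2)) • v := by
          rw [eq_neg_of_add_eq_zero_right h, smul_neg, smul_smul, neg_smul, inv_mul_eq_div]
  have hx := Matrix.mul_self_eq_one_of_mulVec_eq_smul revMatrix_mul_self hrev hv0
  have : x * x = 2 * 2 := by
    field_simp at hx
    linear_combination hx
  simpa using mul_self_eq_mul_self_iff.1 this

lemma SimpleGraph.IsRegularOfDegree.isRoot_charpoly_of_isRoot_charpoly_lstar [NeZero (2 : K)]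
    (hreg : G.IsRegularOfDegree d) {x : K} (hx : ((Lstar G).adjMatrix K).charpoly.IsRoot x) :
    (G.adjMatrix K).charpoly.IsRoot (x - (d - 2)) ∨ (G.adjMatrix K).charpoly.IsRoot (x + (d - 2)) ∨
      x = 2 ∨ x = -2 := by
  obtain ⟨v, hv0, hv⟩ := Matrix.isRoot_charpoly_iff_exists_mulVec_eq_smul.1 hx
  by_cases hadd : ((tailMatrix K G)ᵀ + (headMatrix K G)ᵀ) *ᵥ v = 0
  · by_cases hsub : ((tailMatrix K G)ᵀ - (headMatrix K G)ᵀ) *ᵥ v = 0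
    · exact .inr <| .inr <| eq_two_or_eq_neg_two_of_mulVec_eq_smul_lstar hv0 hv hadd hsub
    · refine .inr <| .inl ?_
      convert Matrix.isRoot_charpoly_sub_of_mul_eq
        (transpose_tailMatrix_sub_transpose_headMatrix_mul_adjMatrix_lstar hreg) hv hsub using 1
      ring
  · exact .inl <| Matrix.isRoot_charpoly_sub_of_mul_eq
      (transpose_tailMatrix_add_transpose_headMatrix_mul_adjMatrix_lstar hreg) hv hadd

end Spectrum

theorem stmt_1_general {V : Type*} [Fintype V] [DecidableEq V] (G : SimpleGraph V)
    (d : ℕ) (hreg : G.IsRegularOfDegree d)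
    (hint : ∀ x : ℝ, (G.adjMatrix ℝ).charpoly.IsRoot x → ∃ k : ℤ, x = k) :
    ∀ x : ℝ, ((Lstar G).adjMatrix ℝ).charpoly.IsRoot x → ∃ k : ℤ, x = k := by
  intro x hx
  rcases hreg.isRoot_charpoly_of_isRoot_charpoly_lstar hx with h | h | rfl | rfl
  · obtain ⟨k, hk⟩ := hint _ h
    exact ⟨k + d - 2, by push_cast; linarith⟩
  · obtain ⟨k, hk⟩ := hint _ h
    exact ⟨k - d + 2, by push_cast; linarith⟩
  · exact ⟨2, by norm_num⟩
  · exact ⟨-2, by norm_num⟩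

theorem stmt_1 {V : Type*} [Fintype V] [DecidableEq V] (G : SimpleGraph V)
    (d : ℕ) (hd : 3 ≤ d) (hreg : G.IsRegularOfDegree d) (hconn : G.Connected)
    (hint : ∀ x : ℝ, (G.adjMatrix ℝ).charpoly.IsRoot x → ∃ k : ℤ, x = k) :
    ∀ x : ℝ, ((Lstar G).adjMatrix ℝ).charpoly.IsRoot x → ∃ k : ℤ, x = k :=
  stmt_1_general G d hreg hint
end

section
/- Let G be a connected d-regular graph (d ≥ 3) with n vertices, m edges and adjacency eigenvalues λ₁,...,λₙ. Then the characteristic polynomial of the Hermitian adjacency matrix of the oriented line graph L⃗(G) equals x^{2(m−n)} · ∏_{i=1}^{n} (x² + λᵢ² − d²). -/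
open Polynomial Matrix
open scoped Classical

/-!
Let `h` and `t` be the arc–vertex incidence matrices recording the head and the tail of each
arc of `G`. For arcs `a, b` we have `(h tᵀ) a b = [head a = tail b]` and
`(t hᵀ) a b = [tail a = head b]`; when both hold, `b` is the reverse of `a` and the two terms
cancel, so `H = i (h tᵀ - t hᵀ) = K L` with `K = [h | t]` and `L = [i tᵀ ; -i hᵀ]`.
Hence `χ_H = x ^ (2m - 2n) χ_{LK}`, and since `tᵀ h = hᵀ t = A` and `tᵀ t = hᵀ h = d I`,
`LK = [[iA, id I], [-id I, -iA]]`. Its off-diagonal blocks are scalar, so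
`χ_{LK} = det ((x - iA)(x + iA) - d²) = det (x² - d² + A²)`, which factors as
`det (μ - A) det (-μ - A) = ∏ (x² + λᵢ² - d²)` for `μ² = d² - x²`.
-/

namespace Matrix

variable {R n : Type*} [CommRing R] [Fintype n] [DecidableEq n]

theorem det_fromBlocks_of_commute (A B C D : Matrix n n R) (hCD : Commute C D)
    (hD : IsRightRegular D.det) :
    (fromBlocks A B C D).det = (A * D - B * C).det := by
  have hmul : fromBlocks A B C D * fromBlocks D 0 (-C) 1 = fromBlocks (A * D - B * C) B 0 D := by
    rw [fromBlocks_multiply]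
    simp [sub_eq_add_neg, hCD.eq]
  apply hD
  simpa [det_fromBlocks_zero₁₂, det_fromBlocks_zero₂₁] using congrArg det hmul

theorem charpoly_fromBlocks_smul_one (P Q : Matrix n n R) (s t : R) :
    (fromBlocks P (s • 1) (t • 1) Q).charpoly =
      (charmatrix P * charmatrix Q - C (s * t) • 1).det := by
  have hmap (r : R) : (r • 1 : Matrix n n R).map C = C r • 1 := by
    simp [smul_one_eq_diagonal, diagonal_map]
  rw [charpoly, charmatrix_fromBlocks, det_fromBlocks_of_commute, hmap, hmap]
  · rw [neg_mul_neg, smul_mul_smul_comm, Matrix.one_mul, ← map_mul]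
  · rw [hmap]
    exact ((Commute.one_left _).smul_left _).neg_left
  · exact (charpoly_monic Q).isRegular.right

theorem charmatrix_I_smul_mul_charmatrix_neg_I_smul (A : Matrix n n ℂ) :
    charmatrix (Complex.I • A) * charmatrix (-Complex.I • A) =
      (X ^ 2 : ℂ[X]) • 1 + (A * A).map C := by
  simp only [charmatrix, RingHom.mapMatrix_apply]
  rw [Matrix.map_smul' _ _ _ (map_mul C), Matrix.map_smul' _ _ _ (map_mul C), Matrix.map_mul]
  simp only [scalar_apply, ← smul_one_eq_diagonal, sub_mul, mul_sub, Matrix.smul_mul,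
    Matrix.mul_smul, smul_smul, Matrix.one_mul, Matrix.mul_one]
  rw [map_neg, neg_mul, neg_mul, ← map_mul, Complex.I_mul_I, map_neg, map_one, mul_comm X]
  module

variable {K ι : Type*} [Field K] [IsAlgClosed K] [Fintype ι]

theorem det_smul_one_add_mul_self_of_charpoly (A : Matrix n n K) (lam : ι → K)
    (hchar : A.charpoly = ∏ i, (X - C (lam i))) (z : K) :
    (z • 1 + A * A).det = ∏ i, (z + lam i ^ 2) := by
  obtain ⟨μ, hμ⟩ := IsAlgClosed.exists_pow_nat_eq (-z) two_pos
  have hfactor : z • 1 + A * A = (scalar n μ - A) * (scalar n (-μ) - A) := by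
    simp only [scalar_apply, ← smul_one_eq_diagonal, sub_mul, mul_sub, Matrix.smul_mul,
      Matrix.mul_smul, smul_smul, Matrix.one_mul, Matrix.mul_one]
    rw [show -μ * μ = z by linear_combination -hμ]
    module
  have heval (t : K) : (scalar n t - A).det = ∏ i, (t - lam i) := by
    rw [← eval_charpoly, hchar, eval_prod]
    simp
  rw [hfactor, det_mul, heval, heval, ← Finset.prod_mul_distrib]
  refine Finset.prod_congr rfl fun i _ => ?_
  linear_combination -hμ

theorem det_X_sq_smul_one_add_mul_self_sub_of_charpoly (A : Matrix n n K) (lam : ι → K)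
    (hchar : A.charpoly = ∏ i, (X - C (lam i))) (c : K) :
    ((X ^ 2 : K[X]) • 1 + (A * A).map C - C c • 1).det =
      ∏ i, (X ^ 2 + C (lam i ^ 2 - c)) := by
  refine Polynomial.funext fun x => ?_
  have hev : (evalRingHom x).mapMatrix ((X ^ 2 : K[X]) • 1 + (A * A).map C - C c • 1) =
      (x ^ 2 - c) • 1 + A * A := by
    ext i j
    rcases eq_or_ne i j with rfl | h
    · simp only [RingHom.mapMatrix_apply, coe_evalRingHom, map_apply, Matrix.sub_apply,
        Matrix.add_apply, Matrix.smul_apply, one_apply_eq, smul_eq_mul, mul_one, eval_sub,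
        eval_add, eval_pow, eval_X, eval_C]
      ring
    · simp [h, -Matrix.map_mul]
  rw [← coe_evalRingHom, RingHom.map_det, hev, det_smul_one_add_mul_self_of_charpoly A lam hchar,
    map_prod]
  refine Finset.prod_congr rfl fun i _ => ?_
  simp only [coe_evalRingHom, eval_add, eval_pow, eval_X, eval_C]
  ring

end Matrix

noncomputable def hermitianAdjMatrix {α : Type*} (r : α → α → Prop) : Matrix α α ℂ :=
  of fun a b => if r a b ∧ ¬ r b a then Complex.I
    else if r b a ∧ ¬ r a b then -Complex.I
    else if r a b ∧ r b a then 1 else 0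

namespace SimpleGraph

variable {V : Type*} (G : SimpleGraph V)

def arcReverse : Equiv.Perm (OLV G) :=
  Function.Involutive.toPerm (fun a => ⟨a.1.swap, a.2.symm⟩) fun _ => rfl

theorem card_OLV [Fintype V] : Fintype.card (OLV G) = 2 * G.edgeFinset.card := by
  rw [two_mul_card_edgeFinset, Fintype.card_subtype]

theorem card_le_card_edgeFinset_of_isRegularOfDegree [Fintype V] {d : ℕ} (hd : 2 ≤ d)
    (hreg : G.IsRegularOfDegree d) : Fintype.card V ≤ G.edgeFinset.card := by
  have hsum := G.sum_degrees_eq_twice_card_edges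
  simp only [hreg.degree_eq, Finset.sum_const, Finset.card_univ, smul_eq_mul] at hsum
  nlinarith

variable [DecidableEq V] (R : Type*)

def headIncMatrix [Zero R] [One R] : Matrix (OLV G) V R :=
  of fun a v => if a.1.2 = v then 1 else 0

def tailIncMatrix [Zero R] [One R] : Matrix (OLV G) V R :=
  of fun a v => if a.1.1 = v then 1 else 0

theorem headIncMatrix_eq_submatrix [Zero R] [One R] :
    G.headIncMatrix R = (G.tailIncMatrix R).submatrix G.arcReverse id := rfl

theorem tailIncMatrix_eq_submatrix [Zero R] [One R] :
    G.tailIncMatrix R = (G.headIncMatrix R).submatrix G.arcReverse id := rfl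

variable [Fintype V] [NonAssocSemiring R]

omit [DecidableEq V] in
theorem sum_OLV (f : V × V → R) :
    ∑ a : OLV G, f a.1 = ∑ u, ∑ v, f (u, v) * G.adjMatrix R u v := by
  rw [← Finset.subtype_univ, Finset.sum_subtype_eq_sum_filter, Finset.sum_filter,
    Fintype.sum_prod_type]
  simp [adjMatrix_apply]

omit [DecidableEq V] in
theorem sum_adjMatrix_apply (u : V) : ∑ v, G.adjMatrix R u v = G.degree u := by
  simp [adjMatrix_apply, ← card_neighborFinset_eq_degree, neighborFinset_eq_filter]

theorem tailIncMatrix_transpose_mul_headIncMatrix :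
    (G.tailIncMatrix R)ᵀ * G.headIncMatrix R = G.adjMatrix R := by
  ext u v
  rw [mul_apply]
  simp only [transpose_apply, tailIncMatrix, headIncMatrix, of_apply, mul_ite, mul_one, mul_zero]
  rw [sum_OLV G R fun p => if p.2 = v then if p.1 = u then (1 : R) else 0 else 0]
  simp only [ite_mul, one_mul, zero_mul, Finset.sum_ite_eq', Finset.mem_univ, if_true]

theorem tailIncMatrix_transpose_mul_self :
    (G.tailIncMatrix R)ᵀ * G.tailIncMatrix R = diagonal fun v => (G.degree v : R) := by
  ext u v
  rw [mul_apply]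
  simp only [transpose_apply, tailIncMatrix, of_apply, mul_ite, mul_one, mul_zero]
  rw [sum_OLV G R fun p => if p.1 = v then if p.1 = u then (1 : R) else 0 else 0]
  simp only [ite_mul, one_mul, zero_mul, Finset.sum_ite_irrel, Finset.sum_const_zero,
    Finset.sum_ite_eq', Finset.mem_univ, if_true, sum_adjMatrix_apply, diagonal_apply]
  rcases eq_or_ne u v with rfl | h
  · simp
  · simp [h, h.symm]

theorem headIncMatrix_transpose_mul_tailIncMatrix :
    (G.headIncMatrix R)ᵀ * G.tailIncMatrix R = G.adjMatrix R := by
  rw [tailIncMatrix_eq_submatrix]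
  nth_rw 1 [headIncMatrix_eq_submatrix]
  rw [transpose_submatrix, submatrix_mul_equiv, submatrix_id_id,
    tailIncMatrix_transpose_mul_headIncMatrix]

theorem headIncMatrix_transpose_mul_self :
    (G.headIncMatrix R)ᵀ * G.headIncMatrix R = diagonal fun v => (G.degree v : R) := by
  rw [headIncMatrix_eq_submatrix, transpose_submatrix, submatrix_mul_equiv, submatrix_id_id,
    tailIncMatrix_transpose_mul_self]

theorem headIncMatrix_mul_transpose_tailIncMatrix_apply (a b : OLV G) :
    (G.headIncMatrix R * (G.tailIncMatrix R)ᵀ) a b = if a.1.2 = b.1.1 then 1 else 0 := by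
  simp [headIncMatrix, tailIncMatrix, mul_apply]

theorem tailIncMatrix_mul_transpose_headIncMatrix_apply (a b : OLV G) :
    (G.tailIncMatrix R * (G.headIncMatrix R)ᵀ) a b = if a.1.1 = b.1.2 then 1 else 0 := by
  simp [headIncMatrix, tailIncMatrix, mul_apply]

theorem hermitianAdjMatrix_olArc_eq_fromCols_mul_fromRows :
    hermitianAdjMatrix (olArc G) =
      fromCols (G.headIncMatrix ℂ) (G.tailIncMatrix ℂ) *
        fromRows (Complex.I • (G.tailIncMatrix ℂ)ᵀ)
          (-Complex.I • (G.headIncMatrix ℂ)ᵀ) := by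
  ext a b
  simp only [fromCols_mul_fromRows, Matrix.mul_smul, Matrix.add_apply, Matrix.smul_apply,
    smul_eq_mul, hermitianAdjMatrix, olArc, of_apply,
    headIncMatrix_mul_transpose_tailIncMatrix_apply,
    tailIncMatrix_mul_transpose_headIncMatrix_apply]
  by_cases h₁ : a.1.2 = b.1.1 <;> by_cases h₂ : a.1.1 = b.1.2 <;>
    simp [h₁, h₂, @eq_comm _ b.1.1, @eq_comm _ b.1.2]

theorem fromRows_mul_fromCols_of_isRegularOfDegree {d : ℕ} (hreg : G.IsRegularOfDegree d) :
    fromRows (Complex.I • (G.tailIncMatrix ℂ)ᵀ) (-Complex.I • (G.headIncMatrix ℂ)ᵀ) *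
        fromCols (G.headIncMatrix ℂ) (G.tailIncMatrix ℂ) =
      fromBlocks (Complex.I • G.adjMatrix ℂ) ((Complex.I * d) • 1)
        ((-Complex.I * d) • 1) (-Complex.I • G.adjMatrix ℂ) := by
  have hdeg : (diagonal fun v => (G.degree v : ℂ)) = (d : ℂ) • 1 := by
    simp [hreg.degree_eq, smul_one_eq_diagonal]
  simp only [fromRows_mul_fromCols, Matrix.smul_mul, tailIncMatrix_transpose_mul_headIncMatrix,
    tailIncMatrix_transpose_mul_self, headIncMatrix_transpose_mul_self,
    headIncMatrix_transpose_mul_tailIncMatrix, hdeg, smul_smul]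

end SimpleGraph

theorem stmt_3_general {V : Type*} [Fintype V] [DecidableEq V] (G : SimpleGraph V)
    (d n m : ℕ) (hd : 3 ≤ d) (hreg : G.IsRegularOfDegree d)
    (hn : Fintype.card V = n) (hm : G.edgeFinset.card = m)
    (lam : Fin n → ℝ)
    (hchar : (G.adjMatrix ℂ).charpoly = ∏ i, (X - C (lam i : ℂ))) :
    (Matrix.of fun a b : OLV G =>
        if olArc G a b ∧ ¬ olArc G b a then Complex.I
        else if olArc G b a ∧ ¬ olArc G a b then -Complex.I
        else if olArc G a b ∧ olArc G b a then 1 else 0).charpoly =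
      X ^ (2 * (m - n)) * ∏ i, (X ^ 2 + C (((lam i : ℝ) ^ 2 - (d : ℝ) ^ 2 : ℝ) : ℂ)) := by
  have hnm : n ≤ m := hn ▸ hm ▸ G.card_le_card_edgeFinset_of_isRegularOfDegree (by omega) hreg
  have hcard : Fintype.card (V ⊕ V) ≤ Fintype.card (OLV G) := by
    rw [Fintype.card_sum, G.card_OLV, hn, hm]
    omega
  have hexp : Fintype.card (OLV G) - Fintype.card (V ⊕ V) = 2 * (m - n) := by
    rw [Fintype.card_sum, G.card_OLV, hn, hm]
    omega
  have hst : Complex.I * d * (-Complex.I * d) = (d : ℂ) ^ 2 := by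
    linear_combination (-(d : ℂ) ^ 2) * Complex.I_sq
  change (hermitianAdjMatrix (olArc G)).charpoly = _
  rw [G.hermitianAdjMatrix_olArc_eq_fromCols_mul_fromRows,
    charpoly_mul_comm_of_le _ _ hcard, hexp,
    G.fromRows_mul_fromCols_of_isRegularOfDegree hreg, charpoly_fromBlocks_smul_one,
    charmatrix_I_smul_mul_charmatrix_neg_I_smul, hst,
    det_X_sq_smul_one_add_mul_self_sub_of_charpoly _ _ hchar]
  push_cast
  rfl

theorem stmt_3 {V : Type*} [Fintype V] [DecidableEq V] (G : SimpleGraph V)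
    (d n m : ℕ) (hd : 3 ≤ d) (hreg : G.IsRegularOfDegree d) (hconn : G.Connected)
    (hn : Fintype.card V = n) (hm : G.edgeFinset.card = m)
    (lam : Fin n → ℝ)
    (hchar : (G.adjMatrix ℂ).charpoly = ∏ i, (X - C (lam i : ℂ))) :
    (Matrix.of fun a b : OLV G =>
        if olArc G a b ∧ ¬ olArc G b a then Complex.I
        else if olArc G b a ∧ ¬ olArc G a b then -Complex.I
        else if olArc G a b ∧ olArc G b a then 1 else 0).charpoly =
      X ^ (2 * (m - n)) * ∏ i, (X ^ 2 + C (((lam i : ℝ) ^ 2 - (d : ℝ) ^ 2 : ℝ) : ℂ)) :=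
  stmt_3_general G d n m hd hreg hn hm lam hchar
end

section
/- Let G be a connected d-regular graph with d ≥ 3. The map ψ sending each vertex (u,v) of L*(G) to the edge uv of L(G) is a locally bijective homomorphism from L*(G) to L(G); i.e., L*(G) is a 2-lift (double cover) of the line graph L(G). -/
open Polynomial Matrix
open scoped Classical

/-!
The neighbours of an arc `(u, v)` in `L*(G)` are the arcs `(v, w)` with `w ≠ u` and `(w, u)`
with `w ≠ v`; forgetting orientation sends them exactly onto the edges `vw` and `wu` meeting
`uv`. An arc and its reverse are never both neighbours of the same arc, which gives injectivity,
and every edge has exactly its two orientations as preimages.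
-/

lemma olArc_irrefl {V : Type*} {G : SimpleGraph V} (a : OLV G) : ¬ olArc G a a :=
  fun h => G.ne_of_adj a.2 h.1.symm

lemma lstar_adj_iff_s13 {V : Type*} {G : SimpleGraph V} {a b : OLV G} :
    (Lstar G).Adj a b ↔ olArc G a b ∨ olArc G b a := by
  rw [Lstar, SimpleGraph.fromRel_adj, and_iff_right_iff_imp]
  rintro (h | h) rfl <;> exact olArc_irrefl _ h

namespace OLV

variable {V : Type*} {G : SimpleGraph V}

def edge (a : OLV G) : G.edgeSet := ⟨s(a.1.1, a.1.2), a.2⟩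

def reverse (a : OLV G) : OLV G := ⟨a.1.swap, a.2.symm⟩

lemma edge_reverse (a : OLV G) : a.reverse.edge = a.edge :=
  Subtype.ext Sym2.eq_swap

lemma reverse_ne (a : OLV G) : a.reverse ≠ a := fun h =>
  G.ne_of_adj a.2 (congrArg (fun b : OLV G => b.1.2) h)

lemma edge_surjective : Function.Surjective (edge (G := G)) := by
  rintro ⟨e, he⟩
  induction e using Sym2.ind with
  | h x y => exact ⟨⟨(x, y), he⟩, rfl⟩

lemma edge_eq_edge_iff {a b : OLV G} : b.edge = a.edge ↔ b = a ∨ b = a.reverse := by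
  simp only [edge, reverse, Subtype.ext_iff, Sym2.eq_iff, Prod.ext_iff, Prod.fst_swap,
    Prod.snd_swap]

lemma preimage_edge_singleton (a : OLV G) : edge ⁻¹' {a.edge} = {a, a.reverse} := by
  ext b
  exact edge_eq_edge_iff

lemma ncard_preimage_edge_singleton (e : G.edgeSet) : (edge ⁻¹' {e}).ncard = 2 := by
  obtain ⟨a, rfl⟩ := edge_surjective e
  rw [preimage_edge_singleton, Set.ncard_pair (reverse_ne a).symm]

lemma not_lstar_adj_reverse (a : OLV G) : ¬ (Lstar G).Adj a a.reverse := by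
  simp [lstar_adj_iff_s13, olArc, reverse]

lemma not_lstar_adj_reverse_of_lstar_adj {a b : OLV G} (h : (Lstar G).Adj a b) :
    ¬ (Lstar G).Adj a b.reverse := by
  have := G.ne_of_adj a.2
  have := G.ne_of_adj b.2
  simp only [lstar_adj_iff_s13, olArc, reverse, Prod.fst_swap, Prod.snd_swap] at h ⊢
  grind

lemma lineGraph_adj_edge {a b : OLV G} (h : (Lstar G).Adj a b) :
    G.lineGraph.Adj a.edge b.edge := by
  refine SimpleGraph.lineGraph_adj_iff_exists.2 ⟨fun he => ?_, ?_⟩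
  · rcases edge_eq_edge_iff.1 he.symm with rfl | rfl
    exacts [h.ne rfl, not_lstar_adj_reverse a h]
  · rcases lstar_adj_iff_s13.1 h with ⟨hab, -⟩ | ⟨hba, -⟩
    exacts [⟨a.1.2, Sym2.mem_mk_right _ _, hab ▸ Sym2.mem_mk_left _ _⟩,
      ⟨a.1.1, Sym2.mem_mk_left _ _, hba ▸ Sym2.mem_mk_right _ _⟩]

lemma lstar_adj_or_lstar_adj_reverse {a c : OLV G} (h : G.lineGraph.Adj a.edge c.edge) :
    (Lstar G).Adj a c ∨ (Lstar G).Adj a c.reverse := by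
  obtain ⟨hne, x, hxa, hxc⟩ := SimpleGraph.lineGraph_adj_iff_exists.1 h
  have hca : ¬ (c = a ∨ c = a.reverse) := fun h' => hne (edge_eq_edge_iff.2 h').symm
  have := G.ne_of_adj a.2
  have := G.ne_of_adj c.2
  simp only [edge, Sym2.mem_iff] at hxa hxc
  simp only [lstar_adj_iff_s13, olArc, reverse, Prod.fst_swap, Prod.snd_swap, Subtype.ext_iff,
    Prod.ext_iff] at hca ⊢
  grind

lemma bijOn_edge_neighborSet (a : OLV G) :
    Set.BijOn edge ((Lstar G).neighborSet a) (G.lineGraph.neighborSet a.edge) := by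
  refine ⟨fun _ => lineGraph_adj_edge, fun b hb c hc hbc => ?_, fun f hf => ?_⟩
  · rcases edge_eq_edge_iff.1 hbc.symm with h | rfl
    exacts [h.symm, absurd hc (not_lstar_adj_reverse_of_lstar_adj hb)]
  · obtain ⟨c, rfl⟩ := edge_surjective f
    rcases lstar_adj_or_lstar_adj_reverse hf with h | h
    exacts [⟨c, h, rfl⟩, ⟨c.reverse, h, edge_reverse c⟩]

end OLV

theorem stmt_13_general {V : Type*} (G : SimpleGraph V)
    (ψ : OLV G → G.edgeSet)
    (hψ : ∀ a : OLV G, (ψ a : Sym2 V) = s(a.1.1, a.1.2)) :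
    (∀ a b, (Lstar G).Adj a b → (G.lineGraph).Adj (ψ a) (ψ b)) ∧
      (∀ a : OLV G,
        Set.BijOn ψ ((Lstar G).neighborSet a) ((G.lineGraph).neighborSet (ψ a))) ∧
      ∀ e : G.edgeSet, (ψ ⁻¹' {e}).ncard = 2 := by
  obtain rfl : ψ = OLV.edge := funext fun a => Subtype.ext (hψ a)
  exact ⟨fun _ _ => OLV.lineGraph_adj_edge, OLV.bijOn_edge_neighborSet,
    OLV.ncard_preimage_edge_singleton⟩

theorem stmt_13 {V : Type*} [Fintype V] [DecidableEq V] (G : SimpleGraph V)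
    (d : ℕ) (hd : 3 ≤ d) (hreg : G.IsRegularOfDegree d) (hconn : G.Connected)
    (ψ : OLV G → G.edgeSet)
    (hψ : ∀ a : OLV G, (ψ a : Sym2 V) = s(a.1.1, a.1.2)) :
    (∀ a b, (Lstar G).Adj a b → (G.lineGraph).Adj (ψ a) (ψ b)) ∧
      (∀ a : OLV G,
        Set.BijOn ψ ((Lstar G).neighborSet a) ((G.lineGraph).neighborSet (ψ a))) ∧
      ∀ e : G.edgeSet, (ψ ⁻¹' {e}).ncard = 2 :=
  stmt_13_general G ψ hψ
end

section
/- Let G be a connected d-regular graph (d ≥ 3) with n vertices, m edges and adjacency eigenvalues λ₁,...,λₙ. Let s be the signing of the line graph L(G) induced by viewing L*(G) as a 2-lift of L(G). Then the characteristic polynomial of the signed adjacency matrix of (L(G), s) equals (x−2)^{m−n} · ∏_{i=1}^{n} (x − λᵢ + d − 2). -/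
open Polynomial Matrix
open scoped Classical

/-!
Let `N` be the vertex–edge matrix with `N u e = ±1` according to `ε` of the arc leaving `u`
along `e`. The two arcs of an edge carry opposite values of `ε`, so `N` is an oriented incidence
matrix and `N Nᵀ = D - A = d I - A`. If distinct edges `e`, `f` meet at `v`, the arc entering `v`
along `e` is followed in `L*(G)` by the arc leaving `v` along `f`, which gives `Nᵀ N = 2 I - B`
for the signed adjacency matrix `B` of `L(G)`. Since `N Nᵀ` and `Nᵀ N` have the same
characteristic polynomial up to a factor `X ^ (m - n)`, the spectrum of `B` is read off from that
of `A`.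
-/

theorem Matrix.charpoly_eq_of_mul_transpose {R α β : Type*} [CommRing R] [Fintype α] [Fintype β]
    [DecidableEq α] [DecidableEq β] {N : Matrix α β R} {A : Matrix α α R} {B : Matrix β β R}
    {a b : R} (hA : N * Nᵀ = scalar α a - A) (hB : Nᵀ * N = scalar β b - B)
    (hcard : Fintype.card α ≤ Fintype.card β) :
    B.charpoly =
      (X - C b) ^ (Fintype.card β - Fintype.card α) * A.charpoly.comp (X + C (a - b)) := by
  have hB' : B = -Nᵀ * N - scalar β (-b) := by
    rw [Matrix.neg_mul, hB, map_neg]; abel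
  have hA' : N * -Nᵀ = A - scalar α a := by
    rw [Matrix.mul_neg, hA]; abel
  rw [hB', charpoly_sub_scalar, charpoly_mul_comm_of_le _ _ hcard, hA', charpoly_sub_scalar,
    mul_comp, pow_comp, comp_assoc]
  simp only [X_comp, add_comp, C_comp, map_neg, map_sub]
  congr 2; ring

open SimpleGraph

section SignedIncidence

variable {V : Type*} {G : SimpleGraph V}

def OLV.rev_s15 (a : OLV G) : OLV G := ⟨(a.1.2, a.1.1), a.2.symm⟩

lemma OLV.rev_ne (a : OLV G) : a.rev_s15 ≠ a :=
  fun h => G.ne_of_adj a.2 (congrArg (·.1.2) h)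

noncomputable def arcFrom (e : G.edgeSet) {u : V} (h : u ∈ (e : Sym2 V)) : OLV G :=
  ⟨(u, Sym2.Mem.other h), by rw [← mem_edgeSet, Sym2.other_spec h]; exact e.2⟩

lemma arcFrom_eq_rev {e : G.edgeSet} {u w : V} (hu : u ∈ (e : Sym2 V)) (hw : w ∈ (e : Sym2 V))
    (huw : u ≠ w) : arcFrom e hw = (arcFrom e hu).rev_s15 := by
  have he : (e : Sym2 V) = s(u, w) := (Sym2.mem_and_mem_iff huw).mp ⟨hu, hw⟩
  have hu' : Sym2.Mem.other hu = w := Sym2.congr_right.mp ((Sym2.other_spec hu).trans he)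
  have hw' : Sym2.Mem.other hw = u :=
    Sym2.congr_right.mp ((Sym2.other_spec hw).trans (he.trans Sym2.eq_swap))
  exact Subtype.ext (Prod.ext hu'.symm hw')

variable {ψ : OLV G → G.edgeSet} (hψ : ∀ a : OLV G, (ψ a : Sym2 V) = s(a.1.1, a.1.2))

include hψ in
lemma apply_arcFrom_eq (e : G.edgeSet) {u : V} (h : u ∈ (e : Sym2 V)) : ψ (arcFrom e h) = e :=
  Subtype.ext ((hψ _).trans (Sym2.other_spec h))

include hψ in
lemma apply_rev_eq (a : OLV G) : ψ a.rev_s15 = ψ a :=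
  Subtype.ext ((hψ _).trans (Sym2.eq_swap.trans (hψ a).symm))

variable (ε : OLV G → Bool)

def arcSign (a : OLV G) : ℝ := if ε a then 1 else -1

lemma arcSign_mul_self (a : OLV G) : arcSign ε a * arcSign ε a = 1 := by
  unfold arcSign; split_ifs <;> norm_num

lemma arcSign_mul (a b : OLV G) :
    arcSign ε a * arcSign ε b = if ε a = ε b then 1 else -1 := by
  unfold arcSign; cases ε a <;> cases ε b <;> norm_num

variable {ε} (hε : ∀ a b : OLV G, ψ a = ψ b → a ≠ b → ε a ≠ ε b)

include hψ hε in
lemma arcSign_rev (a : OLV G) : arcSign ε a.rev_s15 = -arcSign ε a := by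
  have h := hε _ _ (apply_rev_eq hψ a) a.rev_ne
  unfold arcSign; cases hr : ε a.rev_s15 <;> cases ha : ε a <;> simp_all

lemma sgn_eq_arcSign_mul (sgn : G.edgeSet → G.edgeSet → ℤ)
    (hsgn : ∀ a b : OLV G, (Lstar G).Adj a b → sgn (ψ a) (ψ b) = if ε a = ε b then 1 else -1)
    {a b : OLV G} (hab : olArc G a b) : (sgn (ψ a) (ψ b) : ℝ) = arcSign ε a * arcSign ε b := by
  have hne : a ≠ b := by
    rintro rfl
    exact G.ne_of_adj a.2 hab.1.symm
  rw [hsgn a b ⟨hne, Or.inl hab⟩, arcSign_mul]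
  split_ifs <;> norm_num

variable [DecidableEq V]

variable (ε) in
noncomputable def signedIncMatrix : Matrix V G.edgeSet ℝ :=
  Matrix.of fun u e => if h : u ∈ (e : Sym2 V) then arcSign ε (arcFrom e h) else 0

lemma signedIncMatrix_apply_of_not_mem {u : V} {e : G.edgeSet} (h : u ∉ (e : Sym2 V)) :
    signedIncMatrix ε u e = 0 := by
  simp [signedIncMatrix, h]

lemma signedIncMatrix_mul_self_apply (u : V) (e : G.edgeSet) :
    signedIncMatrix ε u e * signedIncMatrix ε u e = if u ∈ (e : Sym2 V) then 1 else 0 := by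
  by_cases h : u ∈ (e : Sym2 V)
  · simp [signedIncMatrix, h, arcSign_mul_self]
  · simp [signedIncMatrix, h]

lemma signedIncMatrix_mul_apply_eq_zero {u w : V} {e f : G.edgeSet}
    (h : ¬(u ∈ (e : Sym2 V) ∧ w ∈ (f : Sym2 V))) :
    signedIncMatrix ε u e * signedIncMatrix ε w f = 0 := by
  rcases not_and_or.mp h with hu | hw
  · rw [signedIncMatrix_apply_of_not_mem hu, zero_mul]
  · rw [signedIncMatrix_apply_of_not_mem hw, mul_zero]

include hψ hε in
lemma signedIncMatrix_mul_apply_of_mem_of_mem {e : G.edgeSet} {u w : V} (huw : u ≠ w)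
    (hu : u ∈ (e : Sym2 V)) (hw : w ∈ (e : Sym2 V)) :
    signedIncMatrix ε u e * signedIncMatrix ε w e = -1 := by
  simp only [signedIncMatrix, of_apply, dif_pos hu, dif_pos hw, arcFrom_eq_rev hu hw huw,
    arcSign_rev hψ hε, mul_neg, arcSign_mul_self]

include hψ hε in
lemma signedIncMatrix_mul_apply_of_ne (sgn : G.edgeSet → G.edgeSet → ℤ)
    (hsgn : ∀ a b : OLV G, (Lstar G).Adj a b → sgn (ψ a) (ψ b) = if ε a = ε b then 1 else -1)
    {e f : G.edgeSet} (hef : e ≠ f) {v : V} (he : v ∈ (e : Sym2 V)) (hf : v ∈ (f : Sym2 V)) :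
    signedIncMatrix ε v e * signedIncMatrix ε v f = -sgn e f := by
  have hab : olArc G (arcFrom e he).rev_s15 (arcFrom f hf) := by
    refine ⟨rfl, fun h => hef (Subtype.ext ?_)⟩
    change Sym2.Mem.other he = Sym2.Mem.other hf at h
    rw [← Sym2.other_spec he, ← Sym2.other_spec hf, h]
  have hs := sgn_eq_arcSign_mul sgn hsgn hab
  rw [apply_rev_eq hψ, apply_arcFrom_eq hψ, apply_arcFrom_eq hψ, arcSign_rev hψ hε] at hs
  simp only [signedIncMatrix, of_apply, dif_pos he, dif_pos hf, hs, neg_mul, neg_neg]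

end SignedIncidence

section IncidenceProducts

variable {V : Type*} [Fintype V] [DecidableEq V] {G : SimpleGraph V} {ε : OLV G → Bool}
  {ψ : OLV G → G.edgeSet} (hψ : ∀ a : OLV G, (ψ a : Sym2 V) = s(a.1.1, a.1.2))
  (hε : ∀ a b : OLV G, ψ a = ψ b → a ≠ b → ε a ≠ ε b)

lemma sum_signedIncMatrix_mul_self_eq_degree (u : V) :
    ∑ e, signedIncMatrix ε u e * signedIncMatrix ε u e = G.degree u := by
  simp only [signedIncMatrix_mul_self_apply]
  rw [← Finset.sum_subtype G.edgeFinset (fun _ => mem_edgeFinset)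
      (fun e => if u ∈ e then (1 : ℝ) else 0), Finset.sum_boole, ← incidenceFinset_eq_filter,
    card_incidenceFinset_eq_degree]

lemma sum_signedIncMatrix_mul_self_eq_two (e : G.edgeSet) :
    ∑ u, signedIncMatrix ε u e * signedIncMatrix ε u e = 2 := by
  have hcard := Sym2.card_toFinset_of_not_isDiag _ (G.not_isDiag_of_mem_edgeSet e.2)
  have hfilter : ({x | x ∈ (e : Sym2 V)} : Finset V) = (e : Sym2 V).toFinset := by
    ext; simp
  simp only [signedIncMatrix_mul_self_apply, Finset.sum_boole, hfilter, hcard, Nat.cast_ofNat]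

include hψ hε in
theorem signedIncMatrix_mul_transpose :
    signedIncMatrix ε * (signedIncMatrix ε)ᵀ = G.lapMatrix ℝ := by
  ext u w
  simp only [mul_apply, transpose_apply, lapMatrix, degMatrix, Matrix.sub_apply, diagonal_apply,
    adjMatrix_apply]
  by_cases huw : u = w
  · subst huw
    simp [sum_signedIncMatrix_mul_self_eq_degree]
  have hedge : ∀ e : G.edgeSet, u ∈ (e : Sym2 V) ∧ w ∈ (e : Sym2 V) ↔ (e : Sym2 V) = s(u, w) :=
    fun e => Sym2.mem_and_mem_iff huw
  rw [if_neg huw, zero_sub]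
  by_cases hadj : G.Adj u w
  · rw [if_pos hadj, Fintype.sum_eq_single ⟨s(u, w), hadj⟩]
    · exact signedIncMatrix_mul_apply_of_mem_of_mem hψ hε huw (Sym2.mem_mk_left u w)
        (Sym2.mem_mk_right u w)
    · intro e he
      exact signedIncMatrix_mul_apply_eq_zero fun h => he (Subtype.ext ((hedge e).mp h))
  · rw [if_neg hadj, neg_zero]
    refine Finset.sum_eq_zero fun e _ => signedIncMatrix_mul_apply_eq_zero fun h => hadj ?_
    simpa [(hedge e).mp h] using e.2

include hψ hε in
theorem transpose_mul_signedIncMatrix (sgn : G.edgeSet → G.edgeSet → ℤ)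
    (hsgn : ∀ a b : OLV G, (Lstar G).Adj a b → sgn (ψ a) (ψ b) = if ε a = ε b then 1 else -1) :
    (signedIncMatrix ε)ᵀ * signedIncMatrix ε = scalar G.edgeSet (2 : ℝ) -
      Matrix.of fun e f => if G.lineGraph.Adj e f then (sgn e f : ℝ) else 0 := by
  ext e f
  simp only [mul_apply, transpose_apply, Matrix.sub_apply, scalar_apply, diagonal_apply, of_apply]
  by_cases hef : e = f
  · subst hef
    simp [sum_signedIncMatrix_mul_self_eq_two]
  rw [if_neg hef, zero_sub]
  by_cases hadj : G.lineGraph.Adj e f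
  · obtain ⟨-, v, hve, hvf⟩ := lineGraph_adj_iff_exists.mp hadj
    rw [if_pos hadj, Fintype.sum_eq_single v]
    · exact signedIncMatrix_mul_apply_of_ne hψ hε sgn hsgn hef hve hvf
    · refine fun x hxv => signedIncMatrix_mul_apply_eq_zero fun ⟨hxe, hxf⟩ => hef (Subtype.ext ?_)
      rw [(Sym2.mem_and_mem_iff hxv).mp ⟨hxe, hve⟩, (Sym2.mem_and_mem_iff hxv).mp ⟨hxf, hvf⟩]
  · rw [if_neg hadj, neg_zero]
    exact Finset.sum_eq_zero fun x _ => signedIncMatrix_mul_apply_eq_zero fun ⟨hxe, hxf⟩ =>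
      hadj (lineGraph_adj_iff_exists.mpr ⟨hef, x, hxe, hxf⟩)

end IncidenceProducts

namespace SimpleGraph.IsRegularOfDegree

variable {V : Type*} [Fintype V] {G : SimpleGraph V} [DecidableRel G.Adj] {d : ℕ}

lemma lapMatrix_eq [DecidableEq V] (R : Type*) [Ring R] (h : G.IsRegularOfDegree d) :
    G.lapMatrix R = scalar V (d : R) - G.adjMatrix R := by
  rw [lapMatrix, degMatrix, scalar_apply]
  simp only [h.degree_eq]

lemma card_le_card_edgeFinset_s15 (h : G.IsRegularOfDegree d) (hd : 2 ≤ d) :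
    Fintype.card V ≤ G.edgeFinset.card := by
  have hsum := G.sum_degrees_eq_twice_card_edges
  simp only [h.degree_eq, Finset.sum_const, Finset.card_univ, smul_eq_mul] at hsum
  nlinarith

end SimpleGraph.IsRegularOfDegree

theorem stmt_15_general {V : Type*} [Fintype V] [DecidableEq V] (G : SimpleGraph V)
    (d n m : ℕ) (hd : 3 ≤ d) (hreg : G.IsRegularOfDegree d)
    (hn : Fintype.card V = n) (hm : G.edgeFinset.card = m)
    (lam : Fin n → ℝ)
    (hchar : (G.adjMatrix ℝ).charpoly = ∏ i, (X - C (lam i)))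
    (ψ : OLV G → G.edgeSet)
    (hψ : ∀ a : OLV G, (ψ a : Sym2 V) = s(a.1.1, a.1.2))
    (ε : OLV G → Bool)
    (hε : ∀ a b : OLV G, ψ a = ψ b → a ≠ b → ε a ≠ ε b)
    (sgn : G.edgeSet → G.edgeSet → ℤ)
    (hsgn : ∀ a b : OLV G, (Lstar G).Adj a b →
      sgn (ψ a) (ψ b) = if ε a = ε b then 1 else -1) :
    (Matrix.of fun e f : G.edgeSet =>
        if (G.lineGraph).Adj e f then (sgn e f : ℝ) else 0).charpoly =
      (X - 2) ^ (m - n) * ∏ i, (X - C (lam i) + C ((d : ℝ) - 2)) := by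
  have hcard : Fintype.card V ≤ Fintype.card G.edgeSet := by
    rw [← edgeFinset_card]
    exact hreg.card_le_card_edgeFinset_s15 (by omega)
  have hNNt : signedIncMatrix ε * (signedIncMatrix ε)ᵀ = scalar V (d : ℝ) - G.adjMatrix ℝ := by
    rw [signedIncMatrix_mul_transpose hψ hε, hreg.lapMatrix_eq ℝ]
  rw [charpoly_eq_of_mul_transpose hNNt (transpose_mul_signedIncMatrix hψ hε sgn hsgn) hcard,
    hchar, hn, ← edgeFinset_card, hm, prod_comp, map_ofNat]
  refine congrArg _ (Finset.prod_congr rfl fun i _ => ?_)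
  simp only [sub_comp, X_comp, C_comp, map_sub]
  ring

theorem stmt_15 {V : Type*} [Fintype V] [DecidableEq V] (G : SimpleGraph V)
    (d n m : ℕ) (hd : 3 ≤ d) (hreg : G.IsRegularOfDegree d) (hconn : G.Connected)
    (hn : Fintype.card V = n) (hm : G.edgeFinset.card = m)
    (lam : Fin n → ℝ)
    (hchar : (G.adjMatrix ℝ).charpoly = ∏ i, (X - C (lam i)))
    (ψ : OLV G → G.edgeSet)
    (hψ : ∀ a : OLV G, (ψ a : Sym2 V) = s(a.1.1, a.1.2))
    (ε : OLV G → Bool)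
    (hε : ∀ a b : OLV G, ψ a = ψ b → a ≠ b → ε a ≠ ε b)
    (sgn : G.edgeSet → G.edgeSet → ℤ)
    (hsgn : ∀ a b : OLV G, (Lstar G).Adj a b →
      sgn (ψ a) (ψ b) = if ε a = ε b then 1 else -1) :
    (Matrix.of fun e f : G.edgeSet =>
        if (G.lineGraph).Adj e f then (sgn e f : ℝ) else 0).charpoly =
      (X - 2) ^ (m - n) * ∏ i, (X - C (lam i) + C ((d : ℝ) - 2)) :=
  stmt_15_general G d n m hd hreg hn hm lam hchar ψ hψ ε hε sgn hsgn
end
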